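/- Let n be a positive integer and d̃ = binom(n+d-1, d-1). For 1 ≤ p < 2, d̃^{1/p} d^{-n/2} ≤ max_{ζ ∈ ℂ^d, |ζ|=1} |Z(ζ)|_p ≤ d̃^{1/p - 1/2}; and for 2 ≤ p < ∞, max_{ζ ∈ ℂ^d, |ζ|=1} |Z(ζ)|_p = 1. -/

import Mathlib

open MeasureTheory Complex Metric
open scoped ENNReal Classical

noncomputable section

abbrev Cd (d : ℕ) : Type := EuclideanSpace ℂ (Fin d)

instance (d : ℕ) : MeasurableSpace (Cd d) := borel _
instance (d : ℕ) : BorelSpace (Cd d) := ⟨rfl⟩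
noncomputable instance (d : ℕ) : MeasureSpace (Cd d) := measureSpaceOfInnerProductSpace

/-- The open unit ball of `ℂ^d`. -/
def unitBall (d : ℕ) : Set (Cd d) := Metric.ball 0 1

/-- Lebesgue measure on `ℂ^d`, normalized so that the unit ball has measure one. -/
def normVol (d : ℕ) : Measure (Cd d) := (volume (unitBall d))⁻¹ • volume

/-- The inner product `⟨z,w⟩ = ∑ z_j conj (w_j)`. -/
def herm {d : ℕ} (z w : Cd d) : ℂ := ∑ j, z j * (starRingEnd ℂ) (w j)

/-- The normalizing constant `c_σ`. -/
def cCoef (d : ℕ) (σ : ℝ) : ℝ :=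
  Real.Gamma (d + σ + 1) / (Real.Gamma (σ + 1) * Real.Gamma (d + 1))

/-- The Bergman kernel `K_σ(z,w) = (1-|w|²)^σ / (1-⟨z,w⟩)^{d+1+σ}`. -/
def bergKer (d : ℕ) (σ : ℝ) (z w : Cd d) : ℂ :=
  (((1 - ‖w‖ ^ 2 : ℝ) ^ σ : ℝ) : ℂ) / (1 - herm z w) ^ ((((d : ℝ) + 1 + σ : ℝ)) : ℂ)

/-- The Bergman projection `T_σ f (z) = c_σ ∫_B K_σ(z,w) f(w) dv(w)`. -/
def bergman (d : ℕ) (σ : ℝ) (f : Cd d → ℂ) (z : Cd d) : ℂ :=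
  (cCoef d σ : ℂ) * ∫ w in unitBall d, bergKer d σ z w * f w ∂(normVol d)

/-- The complex partial derivative `∂/∂z_j`. -/
def pd (d : ℕ) (j : Fin d) (f : Cd d → ℂ) : Cd d → ℂ :=
  fun z => fderiv ℂ f z (EuclideanSpace.single j 1)

/-- The complex partial derivative `∂^α` for a multi-index `α`. -/
def mpd (d : ℕ) (α : Fin d → ℕ) (f : Cd d → ℂ) : Cd d → ℂ :=
  (List.finRange d).foldr (fun j g => (pd d j)^[α j] g) f

/-- Multi-indices `α ∈ ℤ₊^d` with `|α| = n`; there are `d̃ = (n+d-1).choose (d-1)` of them. -/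
def MIdx (d n : ℕ) : Type := {α : Fin d → ℕ // ∑ j, α j = n}

instance (d n : ℕ) : Fintype (MIdx d n) :=
  Fintype.subtype (Finset.Nat.antidiagonalTuple d n)
    (fun _ => Finset.Nat.mem_antidiagonalTuple)

/-- `𝒟_z f (z) = (∂^α f(z))_{|α|=n} ∈ ℂ^{d̃}`. -/
def Dmap (d n : ℕ) (f : Cd d → ℂ) (z : Cd d) : MIdx d n → ℂ := fun α => mpd d α.1 f z

/-- `Z(ζ) = (ζ^α)_{|α|=n} ∈ ℂ^{d̃}`. -/
def Zmap (d n : ℕ) (ζ : Cd d) : MIdx d n → ℂ := fun α => ∏ j, ζ j ^ α.1 j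

/-- The Bloch seminorm `‖f‖_𝓑 = sup_{z∈B} (1-|z|²)^n |𝒟_z f(z)|` w.r.t. a norm `N` on `ℂ^{d̃}`. -/
def blochSemi (d n : ℕ) (N : (MIdx d n → ℂ) → ℝ) (f : Cd d → ℂ) : ℝ :=
  ⨆ z : unitBall d, (1 - ‖(z : Cd d)‖ ^ 2) ^ n * N (Dmap d n f z)

/-- The seminorm of `T_σ : L^∞(B) → 𝓑`, i.e. `sup_{‖G‖_∞ ≤ 1} ‖T_σ G‖_𝓑`. -/
def opSemi (d n : ℕ) (σ : ℝ) (N : (MIdx d n → ℂ) → ℝ) : ℝ :=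
  ⨆ G : {G : Cd d → ℂ // Measurable G ∧ ∀ w, ‖G w‖ ≤ 1},
    blochSemi d n N (bergman d σ G.1)

/-- `𝓒 = max_{|ζ|=1} |Z(ζ)|`. -/
def maxC (d n : ℕ) (N : (MIdx d n → ℂ) → ℝ) : ℝ :=
  ⨆ ζ : Metric.sphere (0 : Cd d) 1, N (Zmap d n (ζ : Cd d))

/-- The Möbius automorphism `φ_z` of the unit ball, with `φ_0 = -id`. -/
def moebius (d : ℕ) (z ω : Cd d) : Cd d :=
  if z = 0 then -ω
  else (1 - herm ω z)⁻¹ •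
    (z - (herm ω z / ((‖z‖ ^ 2 : ℝ) : ℂ)) • z
       - ((Real.sqrt (1 - ‖z‖ ^ 2) : ℝ) : ℂ) • (ω - (herm ω z / ((‖z‖ ^ 2 : ℝ) : ℂ)) • z))

end

/-!
On the unit sphere the numbers `|ζ^α|²`, `|α| = n`, are (up to multinomial coefficients `≥ 1`)
the terms of the expansion of `(∑ |ζ_j|²)^n = 1`, so `|Z(ζ)|₂ ≤ 1`. For `p ≥ 2` this gives
`|Z(ζ)|_p ≤ 1`, with equality at a coordinate vector. For `p < 2` the power-mean inequality
on the `d̃` coordinates gives `|Z(ζ)|_p ≤ d̃^{1/p - 1/2} |Z(ζ)|₂`, while the vector with all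
coordinates `d^{-1/2}` has `|ζ^α| = d^{-n/2}` for every `α`.
-/

theorem card_MIdx (d n : ℕ) (hd : 0 < d) :
    Fintype.card (MIdx d n) = (n + d - 1).choose (d - 1) := by
  have e : MIdx d n ≃ Sym (Fin d) n := (Sym.equivNatSumOfFintype (Fin d) n).symm
  rw [Fintype.card_congr e, Sym.card_sym_eq_choose,
    Fintype.card_fin, show d + n - 1 = n + (d - 1) by omega, show n + d - 1 = n + (d - 1) by omega,
    Nat.choose_symm_add]

theorem sum_prod_pow_le_pow_sum (d n : ℕ) (x : Fin d → ℝ) (hx : ∀ j, 0 ≤ x j) :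
    ∑ α : MIdx d n, ∏ j, x j ^ α.1 j ≤ (∑ j, x j) ^ n := by
  have h : ∑ α : MIdx d n, ∏ j, x j ^ α.1 j = ∑ k ∈ Finset.piAntidiag .univ n, ∏ j, x j ^ k j :=
    (Finset.sum_subtype _ (p := fun k : Fin d → ℕ => ∑ j, k j = n)
      (fun k => by simp [Finset.mem_piAntidiag]) fun k => ∏ j, x j ^ k j).symm
  rw [h, Finset.sum_pow_eq_sum_piAntidiag]
  refine Finset.sum_le_sum fun k _ => le_mul_of_one_le_left
    (Finset.prod_nonneg fun j _ => pow_nonneg (hx j) _) ?_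
  exact_mod_cast Nat.one_le_iff_ne_zero.2 (Nat.multinomial_pos _ _).ne'

theorem norm_Zmap (d n : ℕ) (ζ : Cd d) (α : MIdx d n) :
    ‖Zmap d n ζ α‖ = ∏ j, ‖ζ j‖ ^ α.1 j := by
  simp [Zmap, norm_prod, norm_pow]

theorem sum_norm_Zmap_sq_le (d n : ℕ) (ζ : Cd d) :
    ∑ α : MIdx d n, ‖Zmap d n ζ α‖ ^ 2 ≤ (‖ζ‖ ^ 2) ^ n := by
  calc ∑ α : MIdx d n, ‖Zmap d n ζ α‖ ^ 2
      = ∑ α : MIdx d n, ∏ j, (‖ζ j‖ ^ 2) ^ α.1 j := by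
        simp only [norm_Zmap, ← Finset.prod_pow, ← pow_mul, mul_comm]
    _ ≤ (∑ j, ‖ζ j‖ ^ 2) ^ n := sum_prod_pow_le_pow_sum d n _ fun j => sq_nonneg _
    _ = (‖ζ‖ ^ 2) ^ n := by rw [EuclideanSpace.norm_sq_eq]

section PowerSums

variable {ι : Type*} [Fintype ι] {x : ι → ℝ} {p : ℝ}

theorem sum_rpow_rpow_le_card_rpow_of_sum_sq_le_one (hx : ∀ i, 0 ≤ x i)
    (h : ∑ i, x i ^ 2 ≤ 1) (hp0 : 0 < p) (hp : p ≤ 2) :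
    (∑ i, x i ^ p) ^ (1 / p) ≤ (Fintype.card ι : ℝ) ^ (1 / p - 1 / 2) := by
  set S := ∑ i, x i ^ p
  have hS : 0 ≤ S := Finset.sum_nonneg fun i _ => Real.rpow_nonneg (hx i) p
  -- the power-mean inequality with exponent `2 / p ≥ 1`, applied to the numbers `x i ^ p`
  have hPowerMean : S ^ (2 / p) ≤ (Fintype.card ι : ℝ) ^ (2 / p - 1) := by
    have h1 := Real.rpow_sum_le_const_mul_sum_rpow_of_nonneg Finset.univ
      (f := fun i => x i ^ p) (p := 2 / p) (by rw [le_div_iff₀ hp0]; linarith)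
      (fun i _ => Real.rpow_nonneg (hx i) p)
    have h2 : ∑ i, (x i ^ p) ^ (2 / p) = ∑ i, x i ^ 2 := Finset.sum_congr rfl fun i _ => by
      rw [← Real.rpow_mul (hx i), mul_div_cancel₀ _ hp0.ne', Real.rpow_two]
    rw [h2, Finset.card_univ] at h1
    exact h1.trans (mul_le_of_le_one_right (by positivity) h)
  calc S ^ (1 / p) = (S ^ (2 / p)) ^ (1 / 2 : ℝ) := by
        rw [← Real.rpow_mul hS]; congr 1; ring
    _ ≤ ((Fintype.card ι : ℝ) ^ (2 / p - 1)) ^ (1 / 2 : ℝ) :=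
        Real.rpow_le_rpow (by positivity) hPowerMean (by norm_num)
    _ = (Fintype.card ι : ℝ) ^ (1 / p - 1 / 2) := by
        rw [← Real.rpow_mul (Nat.cast_nonneg _)]; congr 1; ring

theorem sum_rpow_le_one_of_sum_sq_le_one (hx : ∀ i, 0 ≤ x i)
    (h : ∑ i, x i ^ 2 ≤ 1) (hp : 2 ≤ p) : ∑ i, x i ^ p ≤ 1 := by
  refine le_trans (Finset.sum_le_sum fun i _ => ?_) h
  have hxi : x i ≤ 1 := by
    have := (Finset.single_le_sum (fun j _ => sq_nonneg (x j)) (Finset.mem_univ i)).trans h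
    nlinarith [hx i]
  rw [← Real.rpow_two]
  exact Real.rpow_le_rpow_of_exponent_ge' (hx i) hxi (by norm_num) hp

end PowerSums

noncomputable def zmapLpNorm (d n : ℕ) (p : ℝ) (ζ : Cd d) : ℝ :=
  (∑ α : MIdx d n, ‖Zmap d n ζ α‖ ^ p) ^ (1 / p)

section ZmapLpNorm

variable {d n : ℕ} {p : ℝ} {ζ : Cd d}

theorem sum_norm_Zmap_sq_le_one (hζ : ‖ζ‖ ≤ 1) : ∑ α : MIdx d n, ‖Zmap d n ζ α‖ ^ 2 ≤ 1 :=
  (sum_norm_Zmap_sq_le d n ζ).trans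
    (pow_le_one₀ (sq_nonneg _) (pow_le_one₀ (norm_nonneg _) hζ))

theorem zmapLpNorm_le_card_rpow (hζ : ‖ζ‖ ≤ 1) (hp0 : 0 < p) (hp : p ≤ 2) :
    zmapLpNorm d n p ζ ≤ (Fintype.card (MIdx d n) : ℝ) ^ (1 / p - 1 / 2) :=
  sum_rpow_rpow_le_card_rpow_of_sum_sq_le_one (fun _ => norm_nonneg _)
    (sum_norm_Zmap_sq_le_one hζ) hp0 hp

theorem zmapLpNorm_le_one (hζ : ‖ζ‖ ≤ 1) (hp : 2 ≤ p) : zmapLpNorm d n p ζ ≤ 1 :=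
  Real.rpow_le_one (Finset.sum_nonneg fun _ _ => Real.rpow_nonneg (norm_nonneg _) _)
    (sum_rpow_le_one_of_sum_sq_le_one (fun _ => norm_nonneg _) (sum_norm_Zmap_sq_le_one hζ) hp)
    (by positivity)

theorem zmapLpNorm_of_forall_norm_eq {c : ℝ} (hc : 0 ≤ c) (hζ : ∀ j, ‖ζ j‖ = c) (hp : p ≠ 0) :
    zmapLpNorm d n p ζ = (Fintype.card (MIdx d n) : ℝ) ^ (1 / p) * c ^ n := by
  have hZ : ∀ α : MIdx d n, ‖Zmap d n ζ α‖ = c ^ n := fun α => by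
    simp only [norm_Zmap, hζ, Finset.prod_pow_eq_pow_sum, α.2]
  rw [zmapLpNorm, Finset.sum_congr rfl fun α _ => by rw [hZ α], Finset.sum_const,
    Finset.card_univ, nsmul_eq_mul, Real.mul_rpow (Nat.cast_nonneg _) (by positivity),
    ← Real.rpow_mul (by positivity), mul_one_div_cancel hp, Real.rpow_one]

theorem one_le_zmapLpNorm_single (j : Fin d) (hp : 0 < p) :
    1 ≤ zmapLpNorm d n p (EuclideanSpace.single j 1) := by
  let αj : MIdx d n := ⟨Pi.single j n, by simp⟩
  have hZ : Zmap d n (EuclideanSpace.single j 1) αj = 1 := by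
    refine Finset.prod_eq_one fun i _ => ?_
    by_cases hi : i = j
    · subst hi; simp [αj]
    · simp [αj, hi]
  refine Real.one_le_rpow ?_ (by positivity)
  calc (1 : ℝ) = ‖Zmap d n (EuclideanSpace.single j 1) αj‖ ^ p := by simp [hZ]
    _ ≤ _ := Finset.single_le_sum (f := fun α => ‖Zmap d n _ α‖ ^ p)
        (fun α _ => Real.rpow_nonneg (norm_nonneg _) p) (Finset.mem_univ αj)

end ZmapLpNorm

theorem exists_mem_sphere_forall_norm_eq_rpow {d : ℕ} (hd : 0 < d) :
    ∃ ζ ∈ sphere (0 : Cd d) 1, ∀ j, ‖ζ j‖ = (d : ℝ) ^ (-(1 / 2) : ℝ) := by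
  set c : ℝ := (d : ℝ) ^ (-(1 / 2) : ℝ)
  have hc : 0 ≤ c := by positivity
  have hc_sq : c ^ 2 = (d : ℝ)⁻¹ := by
    rw [← Real.rpow_natCast, ← Real.rpow_mul (Nat.cast_nonneg d)]
    norm_num [Real.rpow_neg_one]
  refine ⟨WithLp.toLp 2 fun _ => (c : ℂ), ?_, fun j => by simpa using hc⟩
  rw [mem_sphere_zero_iff_norm, EuclideanSpace.norm_eq, Real.sqrt_eq_one]
  simp only [Complex.norm_real, Real.norm_of_nonneg hc, hc_sq, Finset.sum_const,
    Finset.card_univ, Fintype.card_fin, nsmul_eq_mul]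
  exact mul_inv_cancel₀ (by positivity)

theorem max_Zmap_lp_bounds_general
    (d n : ℕ) (hd : 0 < d) (p : ℝ) (hp : 1 ≤ p)
    (M : ℝ)
    (hM : M = ⨆ ζ : Metric.sphere (0 : Cd d) 1,
        (∑ α : MIdx d n, ‖Zmap d n (ζ : Cd d) α‖ ^ p) ^ (1 / p)) :
    (p < 2 →
      ((Nat.choose (n + d - 1) (d - 1) : ℝ) ^ (1 / p) * (d : ℝ) ^ (-(n : ℝ) / 2) ≤ M ∧
        M ≤ (Nat.choose (n + d - 1) (d - 1) : ℝ) ^ (1 / p - 1 / 2))) ∧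
    (2 ≤ p → M = 1) := by
  have hp0 : 0 < p := zero_lt_one.trans_le hp
  have hball : ∀ ζ : sphere (0 : Cd d) 1, ‖(ζ : Cd d)‖ ≤ 1 := fun ζ => (norm_eq_of_mem_sphere ζ).le
  let e : sphere (0 : Cd d) 1 := ⟨EuclideanSpace.single ⟨0, hd⟩ 1, by simp⟩
  have : Nonempty (sphere (0 : Cd d) 1) := ⟨e⟩
  change M = ⨆ ζ : sphere (0 : Cd d) 1, zmapLpNorm d n p ζ at hM
  rw [← card_MIdx d n hd, hM]
  refine ⟨fun hp2 => ⟨?_, ?_⟩, fun hp2 => le_antisymm ?_ ?_⟩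
  · obtain ⟨u, hu, hu_coord⟩ := exists_mem_sphere_forall_norm_eq_rpow hd
    calc _ = zmapLpNorm d n p u := by
          rw [zmapLpNorm_of_forall_norm_eq (by positivity) hu_coord hp0.ne', ← Real.rpow_natCast,
            ← Real.rpow_mul (Nat.cast_nonneg d)]
          ring_nf
      _ ≤ _ := le_ciSup ⟨_, Set.forall_mem_range.2 fun ζ =>
          zmapLpNorm_le_card_rpow (hball ζ) hp0 hp2.le⟩ (⟨u, hu⟩ : sphere (0 : Cd d) 1)
  · exact ciSup_le fun ζ => zmapLpNorm_le_card_rpow (hball ζ) hp0 hp2.le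
  · exact ciSup_le fun ζ => zmapLpNorm_le_one (hball ζ) hp2
  · exact (one_le_zmapLpNorm_single _ hp0).trans
      (le_ciSup ⟨1, Set.forall_mem_range.2 fun ζ => zmapLpNorm_le_one (hball ζ) hp2⟩ e)

/-- Bounds for `max_{|ζ|=1} |Z(ζ)|_p`: it lies between `d̃^{1/p} d^{-n/2}` and `d̃^{1/p-1/2}`
for `1 ≤ p < 2`, and equals `1` for `2 ≤ p < ∞`. -/
theorem max_Zmap_lp_bounds
    (d n : ℕ) (hd : 0 < d) (hn : 0 < n) (p : ℝ) (hp : 1 ≤ p)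
    (M : ℝ)
    (hM : M = ⨆ ζ : Metric.sphere (0 : Cd d) 1,
        (∑ α : MIdx d n, ‖Zmap d n (ζ : Cd d) α‖ ^ p) ^ (1 / p)) :
    (p < 2 →
      ((Nat.choose (n + d - 1) (d - 1) : ℝ) ^ (1 / p) * (d : ℝ) ^ (-(n : ℝ) / 2) ≤ M ∧
        M ≤ (Nat.choose (n + d - 1) (d - 1) : ℝ) ^ (1 / p - 1 / 2))) ∧
    (2 ≤ p → M = 1) :=
  max_Zmap_lp_bounds_general d n hd p hp M hM
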